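/- Every multi-demand market with strictly positive item valuations admits rough prices under which every legal item yields positive utility: there exists p ∈ ℝ^X with p_x > 0 for all x satisfying the three rough price conditions (for every player i: v_i(x) − p_x > v_i(y) − p_y whenever x ∈ R_i, y ∉ R_i; v_i(x) − p_x = v_i(y) − p_y whenever x, y ∈ K_i ∖ R_i; v_i(x) − p_x > v_i(y) − p_y whenever x ∈ K_i, y ∉ K_i) and such that, in addition, v_i(x) − p_x > 0 for every player i and every x ∈ K_i. -/

import Mathlib

open Finset

/-- The value of a bundle `S` for a player with demand `k` and item valuations `v`:
the maximum, over subsets `T ⊆ S` with `|T| ≤ k`, of the total value of `T`. -/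
noncomputable def bundleValue {X : Type*} [DecidableEq X] (k : ℕ) (v : X → ℝ)
    (S : Finset X) : ℝ :=
  ((S.powerset.filter (fun T => T.card ≤ k)).image (fun T => ∑ x ∈ T, v x)).max'
    (Finset.Nonempty.image ⟨∅, by simp⟩ _)

/-- An allocation: a partition of the items where player `i` gets exactly `k i` items. -/
def IsAllocation {X I : Type*} (k : I → ℕ) (O : I → Finset X) : Prop :=
  (∀ i, (O i).card = k i) ∧ (∀ x : X, ∃! i, x ∈ O i)

/-- Social welfare of an allocation. -/
noncomputable def socialWelfare {X I : Type*} [DecidableEq X] [Fintype I]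
    (v : I → X → ℝ) (k : I → ℕ) (O : I → Finset X) : ℝ :=
  ∑ i, bundleValue (k i) (v i) (O i)

/-- An optimal allocation: an allocation maximizing social welfare. -/
def IsOptimal {X I : Type*} [DecidableEq X] [Fintype I]
    (v : I → X → ℝ) (k : I → ℕ) (O : I → Finset X) : Prop :=
  IsAllocation k O ∧
    ∀ O' : I → Finset X, IsAllocation k O' → socialWelfare v k O' ≤ socialWelfare v k O


/-- An item `x` is legal to player `i`: some optimal allocation assigns `x` to `i`. -/
def LegalItem {X I : Type*} [DecidableEq X] [Fintype I]
    (v : I → X → ℝ) (k : I → ℕ) (i : I) (x : X) : Prop :=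
  ∃ O : I → Finset X, IsOptimal v k O ∧ x ∈ O i

/-- An item `x` belongs to `R_i`: it is assigned to `i` in every optimal allocation. -/
def AlwaysItem {X I : Type*} [DecidableEq X] [Fintype I]
    (v : I → X → ℝ) (k : I → ℕ) (i : I) (x : X) : Prop :=
  ∀ O : I → Finset X, IsOptimal v k O → x ∈ O i

/-!
Fix an optimal allocation and let `a x` be the owner of item `x`. Reassigning items along a
permutation `π` (the owner of `y` receives `π y`) changes the welfare by
`∑ y, (v (a y) (π y) - v (a y) y)`, so optimality says that the "edge weights"
`v (a y) x - v (a y) y` have no positive cycles, and `x` is legal to `i` exactly when some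
zero-gain permutation moves an item of `i` to `x`. Penalising the edges that no zero-gain
permutation uses by a small `ε > 0` keeps all cycles non-positive, so longest simple walks give
prices `q` under which every owner weakly prefers each of its items to any other item, and
strictly (by `ε`) to every item that is not legal to it. Along a zero-gain permutation these
inequalities sum to an equality, so they are all tight: the legal items of a player give it the
same utility. Shifting `q` by a constant makes all prices and all owners' utilities positive, and
lowering the prices of the items in `R_i` by some `δ < ε` separates `R_i`.
-/

open Equiv

theorem bundleValue_eq_sum {X : Type*} [DecidableEq X] {k : ℕ} {v : X → ℝ} {S : Finset X}
    (hv : ∀ x, 0 ≤ v x) (hS : S.card ≤ k) : bundleValue k v S = ∑ x ∈ S, v x := by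
  unfold bundleValue
  refine le_antisymm (max'_le _ _ _ ?_) (le_max' _ (∑ x ∈ S, v x)
    (mem_image.2 ⟨S, mem_filter.2 ⟨mem_powerset.2 subset_rfl, hS⟩, rfl⟩))
  simp only [mem_image, mem_filter, mem_powerset]
  rintro _ ⟨T, ⟨hTS, -⟩, rfl⟩
  exact sum_le_sum_of_subset_of_nonneg hTS fun x _ _ => hv x

section Potential

variable {X : Type*} (c : X → X → ℝ)

def walkWeight : List X → ℝ
  | x :: y :: l => c x y + walkWeight (y :: l)
  | _ => 0

theorem walkWeight_append_cons (A : List X) (x : X) (B : List X) :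
    walkWeight c (A ++ x :: B) = walkWeight c (A ++ [x]) + walkWeight c (x :: B) := by
  induction A with
  | nil => simp [walkWeight]
  | cons y A ih =>
    cases A with
    | nil => simp [walkWeight]
    | cons z A => simp only [List.cons_append, walkWeight] at ih ⊢; rw [ih]; ring

theorem walkWeight_cons_append_singleton (x : X) (A : List X) (y : X) :
    walkWeight c (x :: A ++ [y]) =
      walkWeight c (x :: A) + c ((x :: A).getLast (List.cons_ne_nil x A)) y := by
  induction A generalizing x with
  | nil => simp [walkWeight]
  | cons z A ih =>
    rw [List.cons_append, List.cons_append, walkWeight, ← List.cons_append, ih, walkWeight,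
      List.getLast_cons_cons, add_assoc]

theorem exists_longest_simple_walk_to [Fintype X] (y : X) :
    ∃ l : List X, (l ++ [y]).Nodup ∧
      ∀ l' : List X, (l' ++ [y]).Nodup →
        walkWeight c (l' ++ [y]) ≤ walkWeight c (l ++ [y]) := by
  have : Finite {l : List X // (l ++ [y]).Nodup} := Finite.of_injective _
    (Subtype.impEmbedding _ List.Nodup fun _ hl =>
      hl.sublist (List.sublist_append_left _ _)).injective
  have : Nonempty {l : List X // (l ++ [y]).Nodup} := ⟨⟨[], List.nodup_singleton y⟩⟩
  obtain ⟨⟨l, hl⟩, hmax⟩ := Finite.exists_max fun l : {l : List X // (l ++ [y]).Nodup} =>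
    walkWeight c (l.1 ++ [y])
  exact ⟨l, hl, fun l' hl' => hmax ⟨l', hl'⟩⟩

variable {c} [Fintype X] [DecidableEq X]

theorem sum_apply_formPerm (hdiag : ∀ x, c x x = 0) {x : X} {A : List X}
    (hA : (x :: A).Nodup) :
    ∑ z, c z ((x :: A).formPerm z) = walkWeight c (x :: A ++ [x]) := by
  induction A generalizing x with
  | nil => simp [walkWeight, hdiag]
  | cons y A ih =>
    rw [List.formPerm_cons_cons]
    set σ := (y :: A).formPerm
    set w := (y :: A).getLast (List.cons_ne_nil y A)
    have hxA : x ∉ y :: A := (List.nodup_cons.1 hA).1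
    have hσx : σ x = x := List.formPerm_apply_of_notMem hxA
    have hσw : σ w = y := List.formPerm_apply_getLast y A
    have hxw : x ≠ w := fun h => hxA (h ▸ List.getLast_mem _)
    have hdiff : ∑ z, (c z ((swap x y * σ) z) - c z (σ z)) = c x y + c w x - c w y := by
      rw [Fintype.sum_eq_add x w hxw]
      · simp only [Perm.mul_apply, hσx, hσw, swap_apply_left, swap_apply_right, hdiag]
        ring
      · rintro z ⟨hzx, hzw⟩
        rw [Perm.mul_apply, swap_apply_of_ne_of_ne, sub_self]
        · exact fun h => hzx (σ.injective (h.trans hσx.symm))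
        · exact fun h => hzw (σ.injective (h.trans hσw.symm))
    rw [sum_sub_distrib, ih (List.nodup_cons.1 hA).2, walkWeight_cons_append_singleton] at hdiff
    rw [List.cons_append, List.cons_append, walkWeight, ← List.cons_append,
      walkWeight_cons_append_singleton]
    linarith

theorem walkWeight_cycle_nonpos (hdiag : ∀ x, c x x = 0)
    (hcyc : ∀ σ : Perm X, ∑ z, c z (σ z) ≤ 0) {x : X} {A : List X} (hA : (x :: A).Nodup) :
    walkWeight c (x :: A ++ [x]) ≤ 0 :=
  sum_apply_formPerm hdiag hA ▸ hcyc _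

theorem exists_potential (hdiag : ∀ x, c x x = 0)
    (hcyc : ∀ σ : Perm X, ∑ z, c z (σ z) ≤ 0) :
    ∃ q : X → ℝ, ∀ x y, q x + c x y ≤ q y := by
  choose best hbest_nodup hbest_max using exists_longest_simple_walk_to c
  refine ⟨fun y => walkWeight c (best y ++ [y]), fun x y => ?_⟩
  have hext : walkWeight c (best x ++ [x] ++ [y]) = walkWeight c (best x ++ [x]) + c x y := by
    rw [List.append_assoc, List.singleton_append, walkWeight_append_cons]
    simp [walkWeight]
  rw [← hext]
  by_cases hy : y ∈ best x ++ [x]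
  · -- the extended walk revisits `y`: cut off the cycle it closes
    obtain ⟨A, B, hAB⟩ := List.append_of_mem hy
    have hnodup : (A ++ y :: B).Nodup := hAB ▸ hbest_nodup x
    rw [hAB, List.append_assoc, List.cons_append, walkWeight_append_cons, ← List.cons_append]
    have hcycle :=
      walkWeight_cycle_nonpos hdiag hcyc (hnodup.sublist (List.sublist_append_right A _))
    have hpath := hbest_max y A (hnodup.sublist (by simp))
    linarith
  · exact hbest_max y _
      ((hbest_nodup x).append (List.nodup_singleton y) (List.disjoint_singleton.2 hy))

end Potential

theorem rough_conditions_of_levels {X : Type*} {K R : X → Prop} {f g : X → ℝ}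
    {δ ε : ℝ} (hδ : 0 < δ) (hδε : δ < ε) (hRK : ∀ x, R x → K x)
    (hK : ∀ x y, K x → K y → g x = g y) (hnK : ∀ x y, K x → ¬K y → g y + ε ≤ g x)
    (hR : ∀ x, R x → f x = g x + δ) (hKR : ∀ x, K x → ¬R x → f x = g x)
    (hle : ∀ x, f x ≤ g x + δ) :
    (∀ x y, R x → ¬R y → f y < f x) ∧
      (∀ x y, K x → ¬R x → K y → ¬R y → f x = f y) ∧
      (∀ x y, K x → ¬K y → f y < f x) := by
  refine ⟨fun x y hx hy => ?_, fun x y hx hx' hy hy' => ?_, fun x y hx hy => ?_⟩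
  · rw [hR x hx]
    by_cases hKy : K y
    · rw [hKR y hKy hy, hK y x hKy (hRK x hx)]
      linarith
    · linarith [hle y, hnK x y (hRK x hx) hKy]
  · rw [hKR x hx hx', hKR y hy hy', hK x y hx hy]
  · have hfx : g x ≤ f x := by
      by_cases hRx : R x
      · linarith [hR x hRx]
      · exact (hKR x hx hRx).ge
    linarith [hle y, hnK x y hx hy]

section Allocation

variable {X I : Type*} {k : I → ℕ} {O O' : I → Finset X}

theorem IsAllocation.exists_owner (hO : IsAllocation k O) :
    ∃ a : X → I, ∀ x i, x ∈ O i ↔ a x = i := by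
  choose a ha using hO.2
  exact ⟨a, fun x i => ⟨fun h => ((ha x).2 i h).symm, fun h => h ▸ (ha x).1⟩⟩

theorem IsAllocation.map_perm [DecidableEq X] (hO : IsAllocation k O) (π : Perm X) :
    IsAllocation k fun i => (O i).map π.toEmbedding :=
  ⟨fun i => by simp [hO.1 i], fun x => by simpa [mem_map_equiv] using hO.2 (π.symm x)⟩

theorem IsAllocation.exists_perm_owner_eq [Fintype X] [DecidableEq I] {a b : X → I}
    (hO : IsAllocation k O) (hO' : IsAllocation k O') (ha : ∀ x i, x ∈ O i ↔ a x = i)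
    (hb : ∀ x i, x ∈ O' i ↔ b x = i) : ∃ π : Perm X, ∀ x, b (π x) = a x := by
  have hcard (O : I → Finset X) (a : X → I) (hO : IsAllocation k O)
      (ha : ∀ x i, x ∈ O i ↔ a x = i) (i : I) : Fintype.card {x // a x = i} = k i := by
    rw [Fintype.card_subtype, ← hO.1 i]
    congr 1; ext x; simp [ha]
  exact ⟨Equiv.ofFiberEquiv fun i => Fintype.equivOfCardEq ((hcard O a hO ha i).trans
    (hcard O' b hO' hb i).symm), Equiv.ofFiberEquiv_map _⟩

theorem exists_isOptimal [Finite X] [DecidableEq X] [Fintype I] (v : I → X → ℝ)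
    (hex : ∃ O : I → Finset X, IsAllocation k O) : ∃ O, IsOptimal v k O := by
  obtain ⟨O₀, hO₀⟩ := hex
  have : Nonempty {O : I → Finset X // IsAllocation k O} := ⟨⟨O₀, hO₀⟩⟩
  obtain ⟨⟨O, hO⟩, hmax⟩ := Finite.exists_max fun O : {O // IsAllocation k O} =>
    socialWelfare v k O.1
  exact ⟨O, hO, fun O' hO' => hmax ⟨O', hO'⟩⟩

variable [DecidableEq X] [Fintype I] {v : I → X → ℝ}

theorem AlwaysItem.legalItem {i : I} {x : X} (h : AlwaysItem v k i x)
    (hopt : IsOptimal v k O) : LegalItem v k i x :=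
  ⟨O, hopt, h O hopt⟩

theorem LegalItem.eq_of_alwaysItem {i j : I} {x : X} (h : LegalItem v k i x)
    (h' : AlwaysItem v k j x) : i = j := by
  obtain ⟨O, hopt, hx⟩ := h
  exact (hopt.1.2 x).unique hx (h' O hopt)

end Allocation

section Gain

variable {X I : Type*} [Fintype X] {v : I → X → ℝ} {a : X → I} {ε : ℝ} {q : X → ℝ}

def gain (v : I → X → ℝ) (a : X → I) (π : Perm X) : ℝ :=
  ∑ y, (v (a y) (π y) - v (a y) y)

def OptimalMove (v : I → X → ℝ) (a : X → I) (y x : X) : Prop :=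
  ∃ π : Perm X, gain v a π = 0 ∧ π y = x

theorem optimalMove_refl (v : I → X → ℝ) (a : X → I) (x : X) : OptimalMove v a x x :=
  ⟨1, by simp [gain], rfl⟩

open Classical in
noncomputable def penalizedGain (v : I → X → ℝ) (a : X → I) (ε : ℝ) (y x : X) : ℝ :=
  v (a y) x - v (a y) y + if OptimalMove v a y x then 0 else ε

theorem penalizedGain_self (x : X) : penalizedGain v a ε x x = 0 := by
  simp [penalizedGain, optimalMove_refl]

theorem le_penalizedGain (hε : 0 ≤ ε) (y x : X) :
    v (a y) x - v (a y) y ≤ penalizedGain v a ε y x := by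
  unfold penalizedGain
  split_ifs <;> linarith

theorem penalizedGain_of_not_optimalMove {y x : X} (h : ¬OptimalMove v a y x) :
    penalizedGain v a ε y x = v (a y) x - v (a y) y + ε := by
  simp [penalizedGain, h]

theorem utility_le_of_potential (hε : 0 ≤ ε) (hq : ∀ y x, q y + penalizedGain v a ε y x ≤ q x)
    (y x : X) : v (a y) x - q x ≤ v (a y) y - q y := by
  linarith [hq y x, le_penalizedGain (v := v) (a := a) hε y x]

theorem utility_eq_of_optimalMove (hε : 0 ≤ ε)
    (hq : ∀ y x, q y + penalizedGain v a ε y x ≤ q x) {y x : X} (h : OptimalMove v a y x) :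
    v (a y) x - q x = v (a y) y - q y := by
  obtain ⟨π, hgain, rfl⟩ := h
  -- the slacks along `π` are nonnegative and sum to `-gain v a π = 0`
  have hslack (z : X) : 0 ≤ (v (a z) z - q z) - (v (a z) (π z) - q (π z)) :=
    sub_nonneg.2 (utility_le_of_potential hε hq z (π z))
  have hsum : ∑ z, ((v (a z) z - q z) - (v (a z) (π z) - q (π z))) = 0 := by
    simp only [gain, sum_sub_distrib] at hgain ⊢
    rw [Equiv.sum_comp π q]
    linarith
  have := (sum_eq_zero_iff_of_nonneg fun z _ => hslack z).1 hsum y (mem_univ y)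
  linarith

theorem utility_add_le_of_not_optimalMove (hq : ∀ y x, q y + penalizedGain v a ε y x ≤ q x)
    {y x : X} (h : ¬OptimalMove v a y x) : v (a y) x - q x + ε ≤ v (a y) y - q y := by
  linarith [hq y x, penalizedGain_of_not_optimalMove (ε := ε) h]

theorem exists_normalized_potential [Nonempty X] (hv : ∀ i x, 0 < v i x) (hε : 0 ≤ ε)
    (hq : ∀ y x, q y + penalizedGain v a ε y x ≤ q x) :
    ∃ β > 0, ∃ q' : X → ℝ, (∀ y x, q' y + penalizedGain v a ε y x ≤ q' x) ∧
      (∀ x, β ≤ q' x) ∧ ∀ y, β ≤ v (a y) y - q' y := by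
  obtain ⟨z₀, hz₀⟩ := Finite.exists_min q
  obtain ⟨x₀, hx₀⟩ := Finite.exists_min fun x => v (a x) z₀
  refine ⟨v (a x₀) z₀ / 2, by linarith [hv (a x₀) z₀], fun x => q x - q z₀ + v (a x₀) z₀ / 2,
    fun y x => by linarith [hq y x], fun x => by linarith [hz₀ x], fun y => ?_⟩
  linarith [utility_le_of_potential hε hq y z₀, hx₀ y]

end Gain

section Market

variable {X I : Type*} [Fintype X] [DecidableEq X] [Fintype I] [DecidableEq I]
  {v : I → X → ℝ} {k : I → ℕ} {O O' : I → Finset X} {a b : X → I} {ε β : ℝ} {q : X → ℝ}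

theorem socialWelfare_eq_sum_owner (hv : ∀ i x, 0 ≤ v i x)
    (hO : IsAllocation k O) (ha : ∀ x i, x ∈ O i ↔ a x = i) :
    socialWelfare v k O = ∑ x, v (a x) x := by
  have hfiber (i : I) : O i = univ.filter (a · = i) := by ext x; simp [ha]
  rw [socialWelfare, ← sum_fiberwise univ a (fun x => v (a x) x)]
  refine sum_congr rfl fun i _ => ?_
  rw [bundleValue_eq_sum (hv i) (hO.1 i).le, hfiber i]
  exact sum_congr rfl fun x hx => by rw [(mem_filter.1 hx).2]

theorem socialWelfare_eq_add_gain (hv : ∀ i x, 0 ≤ v i x)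
    (hO : IsAllocation k O) (hO' : IsAllocation k O') (ha : ∀ x i, x ∈ O i ↔ a x = i)
    (hb : ∀ x i, x ∈ O' i ↔ b x = i) {π : Perm X} (hπ : ∀ x, b (π x) = a x) :
    socialWelfare v k O' = socialWelfare v k O + gain v a π := by
  rw [socialWelfare_eq_sum_owner hv hO' hb, socialWelfare_eq_sum_owner hv hO ha, gain,
    sum_sub_distrib, ← Equiv.sum_comp π (fun x => v (b x) x)]
  simp only [hπ]
  ring

theorem socialWelfare_map_perm (hv : ∀ i x, 0 ≤ v i x)
    (hO : IsAllocation k O) (ha : ∀ x i, x ∈ O i ↔ a x = i) (π : Perm X) :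
    socialWelfare v k (fun i => (O i).map π.toEmbedding) = socialWelfare v k O + gain v a π :=
  socialWelfare_eq_add_gain hv hO (hO.map_perm π) ha (b := a ∘ π.symm)
    (by simp [mem_map_equiv, ha]) (π := π) (by simp)

theorem IsOptimal.gain_nonpos (hv : ∀ i x, 0 ≤ v i x) (hopt : IsOptimal v k O)
    (ha : ∀ x i, x ∈ O i ↔ a x = i) (π : Perm X) : gain v a π ≤ 0 := by
  have hle := hopt.2 _ (hopt.1.map_perm π)
  rw [socialWelfare_map_perm hv hopt.1 ha] at hle
  linarith

theorem IsOptimal.legalItem_iff (hv : ∀ i x, 0 ≤ v i x)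
    (hopt : IsOptimal v k O) (ha : ∀ x i, x ∈ O i ↔ a x = i) {i : I} {x : X} :
    LegalItem v k i x ↔ ∃ y, a y = i ∧ OptimalMove v a y x := by
  constructor
  · rintro ⟨O', hopt', hx⟩
    obtain ⟨b, hb⟩ := hopt'.1.exists_owner
    obtain ⟨π, hπ⟩ := hopt.1.exists_perm_owner_eq hopt'.1 ha hb
    have hsw := socialWelfare_eq_add_gain hv hopt.1 hopt'.1 ha hb hπ
    have hgain : gain v a π = 0 := by linarith [hopt.2 O' hopt'.1, hopt'.2 O hopt.1]
    refine ⟨π.symm x, ?_, π, hgain, π.apply_symm_apply x⟩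
    rw [← hπ, π.apply_symm_apply, ← hb]
    exact hx
  · rintro ⟨y, rfl, π, hgain, rfl⟩
    refine ⟨_, ⟨hopt.1.map_perm π, fun O'' hO'' => ?_⟩, mem_map_of_mem _ ((ha y _).2 rfl)⟩
    rw [socialWelfare_map_perm hv hopt.1 ha, hgain, add_zero]
    exact hopt.2 O'' hO''

theorem IsOptimal.exists_penalty (hv : ∀ i x, 0 ≤ v i x) (hopt : IsOptimal v k O)
    (ha : ∀ x i, x ∈ O i ↔ a x = i) :
    ∃ ε > 0, ∀ π : Perm X, (∃ y, ¬OptimalMove v a y (π y)) →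
      gain v a π + Fintype.card X * ε ≤ 0 := by
  classical
  let f : Perm X → ℝ := fun π => if ∃ y, ¬OptimalMove v a y (π y) then -gain v a π else 1
  have hf (π : Perm X) : 0 < f π := by
    by_cases h : ∃ y, ¬OptimalMove v a y (π y)
    · obtain ⟨y, hy⟩ := h
      have hne : gain v a π ≠ 0 := fun h0 => hy ⟨π, h0, rfl⟩
      simp only [f, if_pos (⟨y, hy⟩ : ∃ y, ¬OptimalMove v a y (π y))]
      exact neg_pos.2 ((hopt.gain_nonpos hv ha π).lt_of_ne hne)
    · simp only [f, if_neg h, zero_lt_one]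
  obtain ⟨π₀, hπ₀⟩ := Finite.exists_min f
  refine ⟨f π₀ / (Fintype.card X + 1), div_pos (hf π₀) (by positivity), fun π hπ => ?_⟩
  have hfπ : f π = -gain v a π := if_pos hπ
  have hscale : (Fintype.card X : ℝ) * (f π₀ / (Fintype.card X + 1)) ≤ f π₀ := by
    rw [mul_div_assoc', div_le_iff₀ (by positivity)]
    nlinarith [hf π₀]
  linarith [hπ₀ π]

theorem IsOptimal.sum_penalizedGain_nonpos (hv : ∀ i x, 0 ≤ v i x) (hopt : IsOptimal v k O)
    (ha : ∀ x i, x ∈ O i ↔ a x = i) (hε : 0 ≤ ε)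
    (hpen : ∀ π : Perm X, (∃ y, ¬OptimalMove v a y (π y)) →
      gain v a π + Fintype.card X * ε ≤ 0)
    (π : Perm X) : ∑ y, penalizedGain v a ε y (π y) ≤ 0 := by
  classical
  have hsplit : ∑ y, penalizedGain v a ε y (π y) =
      gain v a π + ∑ y, if OptimalMove v a y (π y) then 0 else ε := by
    rw [gain, ← sum_add_distrib]
    rfl
  rw [hsplit]
  by_cases h : ∃ y, ¬OptimalMove v a y (π y)
  · have hle : ∑ y, (if OptimalMove v a y (π y) then 0 else ε) ≤ Fintype.card X * ε := by
      simpa using sum_le_card_nsmul univ _ ε fun y _ => by split_ifs <;> simp [hε]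
    linarith [hpen π h]
  · simp only [not_exists, not_not] at h
    simpa [h] using hopt.gain_nonpos hv ha π

theorem IsOptimal.exists_supporting_prices [Nonempty X] (hv : ∀ i x, 0 < v i x)
    (hopt : IsOptimal v k O) (ha : ∀ x i, x ∈ O i ↔ a x = i) :
    ∃ ε > 0, ∃ β > 0, ∃ q : X → ℝ, (∀ y x, q y + penalizedGain v a ε y x ≤ q x) ∧
      (∀ x, β ≤ q x) ∧ ∀ y, β ≤ v (a y) y - q y := by
  have hv₀ : ∀ i x, 0 ≤ v i x := fun i x => (hv i x).le
  obtain ⟨ε, hε, hpen⟩ := hopt.exists_penalty hv₀ ha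
  obtain ⟨q, hq⟩ :=
    exists_potential penalizedGain_self (hopt.sum_penalizedGain_nonpos hv₀ ha hε.le hpen)
  exact ⟨ε, hε, exists_normalized_potential hv hε.le hq⟩

theorem IsOptimal.utility_eq_of_legalItem (hv : ∀ i x, 0 ≤ v i x) (hopt : IsOptimal v k O)
    (ha : ∀ x i, x ∈ O i ↔ a x = i) (hε : 0 ≤ ε)
    (hq : ∀ y x, q y + penalizedGain v a ε y x ≤ q x) {i : I} {x y : X}
    (hx : LegalItem v k i x) (hy : LegalItem v k i y) : v i x - q x = v i y - q y := by
  obtain ⟨x₀, rfl, hx₀⟩ := (hopt.legalItem_iff hv ha).1 hx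
  obtain ⟨y₀, hy₀a, hy₀⟩ := (hopt.legalItem_iff hv ha).1 hy
  have hx' := utility_eq_of_optimalMove hε hq hx₀
  have hy' := utility_eq_of_optimalMove hε hq hy₀
  have h₁ := utility_le_of_potential hε hq x₀ y₀
  have h₂ := utility_le_of_potential hε hq y₀ x₀
  rw [hy₀a] at hy' h₂
  linarith

theorem IsOptimal.utility_add_le_of_legalItem (hv : ∀ i x, 0 ≤ v i x) (hopt : IsOptimal v k O)
    (ha : ∀ x i, x ∈ O i ↔ a x = i) (hε : 0 ≤ ε)
    (hq : ∀ y x, q y + penalizedGain v a ε y x ≤ q x) {i : I} {x y : X}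
    (hx : LegalItem v k i x) (hy : ¬LegalItem v k i y) : v i y - q y + ε ≤ v i x - q x := by
  obtain ⟨x₀, rfl, hx₀⟩ := (hopt.legalItem_iff hv ha).1 hx
  rw [utility_eq_of_optimalMove hε hq hx₀]
  exact utility_add_le_of_not_optimalMove hq fun h =>
    hy ((hopt.legalItem_iff hv ha).2 ⟨x₀, rfl, h⟩)

theorem IsOptimal.le_utility_of_legalItem (hv : ∀ i x, 0 ≤ v i x) (hopt : IsOptimal v k O)
    (ha : ∀ x i, x ∈ O i ↔ a x = i) (hε : 0 ≤ ε)
    (hq : ∀ y x, q y + penalizedGain v a ε y x ≤ q x) (hβ : ∀ y, β ≤ v (a y) y - q y)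
    {i : I} {x : X} (hx : LegalItem v k i x) : β ≤ v i x - q x := by
  obtain ⟨x₀, rfl, hx₀⟩ := (hopt.legalItem_iff hv ha).1 hx
  rw [utility_eq_of_optimalMove hε hq hx₀]
  exact hβ x₀

end Market

theorem exists_rough_prices_with_positive_utility_general
    {X I : Type*} [Fintype X] [DecidableEq X] [Fintype I] [DecidableEq I]
    (k : I → ℕ)
    (v : I → X → ℝ) (hv : ∀ i x, 0 < v i x)
    (hex : ∃ O : I → Finset X, IsAllocation k O) :
    ∃ p : X → ℝ, (∀ x, 0 < p x) ∧
      (∀ i,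
        (∀ x y, AlwaysItem v k i x → ¬ AlwaysItem v k i y →
          v i y - p y < v i x - p x) ∧
        (∀ x y, LegalItem v k i x → ¬ AlwaysItem v k i x →
          LegalItem v k i y → ¬ AlwaysItem v k i y →
          v i x - p x = v i y - p y) ∧
        (∀ x y, LegalItem v k i x → ¬ LegalItem v k i y →
          v i y - p y < v i x - p x)) ∧
      (∀ i x, LegalItem v k i x → 0 < v i x - p x) := by
  classical
  rcases isEmpty_or_nonempty X with _ | _
  · exact ⟨fun _ => 1, isEmptyElim, fun _ => ⟨isEmptyElim, isEmptyElim, isEmptyElim⟩,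
      fun _ => isEmptyElim⟩
  have hv₀ : ∀ i x, 0 ≤ v i x := fun i x => (hv i x).le
  obtain ⟨O, hopt⟩ := exists_isOptimal v hex
  obtain ⟨a, ha⟩ := hopt.1.exists_owner
  obtain ⟨ε, hε, β, hβ, q, hq, hqβ, hβq⟩ := hopt.exists_supporting_prices hv ha
  obtain ⟨δ, hδ, hδε, hδβ⟩ : ∃ δ > 0, δ < ε ∧ δ < β :=
    ⟨min ε β / 2, half_pos (lt_min hε hβ), by linarith [min_le_left ε β],
      by linarith [min_le_right ε β]⟩
  let p : X → ℝ := fun x => q x - if ∃ j, AlwaysItem v k j x then δ else 0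
  have hp (x : X) : q x - δ ≤ p x ∧ p x ≤ q x := by
    simp only [p]
    split_ifs <;> constructor <;> linarith
  refine ⟨p, fun x => by linarith [hp x, hqβ x], fun i => ?_, fun i x hx => ?_⟩
  · refine rough_conditions_of_levels (f := fun x => v i x - p x) (g := fun x => v i x - q x)
      hδ hδε (fun x hx => hx.legalItem hopt)
      (fun x y hx hy => hopt.utility_eq_of_legalItem hv₀ ha hε.le hq hx hy)
      (fun x y hx hy => hopt.utility_add_le_of_legalItem hv₀ ha hε.le hq hx hy)
      (fun x hx => ?_) (fun x hx hx' => ?_) (fun x => by linarith [hp x])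
    · simp only [p, if_pos (⟨i, hx⟩ : ∃ j, AlwaysItem v k j x)]
      ring
    · simp only [p, if_neg (not_exists.2 fun j hj => hx' (hx.eq_of_alwaysItem hj ▸ hj))]
      ring
  · linarith [(hp x).2, hopt.le_utility_of_legalItem hv₀ ha hε.le hq hβq hx]

/-- Every multi-demand market with strictly positive item valuations admits rough prices
under which every legal item yields positive utility. -/
theorem exists_rough_prices_with_positive_utility
    {X I : Type*} [Fintype X] [DecidableEq X] [Fintype I] [DecidableEq I]
    (k : I → ℕ) (hk : ∀ i, 1 ≤ k i) (hsum : ∑ i, k i = Fintype.card X)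
    (v : I → X → ℝ) (hv : ∀ i x, 0 < v i x)
    (hex : ∃ O : I → Finset X, IsAllocation k O) :
    ∃ p : X → ℝ, (∀ x, 0 < p x) ∧
      (∀ i,
        (∀ x y, AlwaysItem v k i x → ¬ AlwaysItem v k i y →
          v i y - p y < v i x - p x) ∧
        (∀ x y, LegalItem v k i x → ¬ AlwaysItem v k i x →
          LegalItem v k i y → ¬ AlwaysItem v k i y →
          v i x - p x = v i y - p y) ∧
        (∀ x y, LegalItem v k i x → ¬ LegalItem v k i y →
          v i y - p y < v i x - p x)) ∧
      (∀ i x, LegalItem v k i x → 0 < v i x - p x) :=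
  exists_rough_prices_with_positive_utility_general k v hv hex
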